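/- arXiv:1611.10117 — 3 statements merged into one kernel-verified Lean document; each statement's English description precedes it below -/
import Mathlib

section
/- Let G be a graph on [n] with a proper interval labeling, let H be the associated bipartite graph with edges {x_r, y_s} for edges {r,s} of G with r < s, and let S ⊆ V(H) with S ∩ X = {x_{k_1},…,x_{k_j}} and S ∩ Y = {y_{k_{j+1}},…,y_{k_{i+1}}}, both nonempty. If {x_{k_r}, y_{k_s}} is an edge of H for all 1 ≤ r ≤ j and j+1 ≤ s ≤ i+1, then {k_1, …, k_{i+1}} is a clique of G. -/
/-!
Every `x`-vertex of `S` precedes every `y`-vertex of `S` and is adjacent to it in `G`. So two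
`x`-vertices `a < a'` lie below a common `y`-vertex `b`, and the proper interval property applied
to `a < a' < b` makes them adjacent; dually for two `y`-vertices above a common `x`-vertex.
-/

namespace SimpleGraph

variable {α : Type*} [LinearOrder α] {G : SimpleGraph α}

def IsProperIntervalOrder (G : SimpleGraph α) : Prop :=
  ∀ a b c, a < b → b < c → G.Adj a c → G.Adj a b ∧ G.Adj b c

variable {A B : Set α}

theorem IsProperIntervalOrder.isClique_of_forall_lt_adj_right (hG : G.IsProperIntervalOrder)
    (hB : B.Nonempty) (hAB : ∀ a ∈ A, ∀ b ∈ B, a < b ∧ G.Adj a b) : G.IsClique A := by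
  obtain ⟨b, hb⟩ := hB
  intro a ha a' ha' hne
  wlog hlt : a < a' generalizing a a'
  · exact (this ha' ha hne.symm (lt_of_le_of_ne (not_lt.1 hlt) hne.symm)).symm
  exact (hG a a' b hlt (hAB a' ha' b hb).1 (hAB a ha b hb).2).1

theorem IsProperIntervalOrder.isClique_of_forall_lt_adj_left (hG : G.IsProperIntervalOrder)
    (hA : A.Nonempty) (hAB : ∀ a ∈ A, ∀ b ∈ B, a < b ∧ G.Adj a b) : G.IsClique B := by
  obtain ⟨a, ha⟩ := hA
  intro b hb b' hb' hne
  wlog hlt : b < b' generalizing b b'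
  · exact (this hb' hb hne.symm (lt_of_le_of_ne (not_lt.1 hlt) hne.symm)).symm
  exact (hG a b b' (hAB a ha b hb).1 hlt (hAB a ha b' hb').2).2

theorem IsProperIntervalOrder.isClique_union (hG : G.IsProperIntervalOrder)
    (hA : A.Nonempty) (hB : B.Nonempty) (hAB : ∀ a ∈ A, ∀ b ∈ B, a < b ∧ G.Adj a b) :
    G.IsClique (A ∪ B) :=
  Set.pairwise_union.2
    ⟨hG.isClique_of_forall_lt_adj_right hB hAB, hG.isClique_of_forall_lt_adj_left hA hAB,
      fun a ha b hb _ ↦ ⟨(hAB a ha b hb).2, (hAB a ha b hb).2.symm⟩⟩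

end SimpleGraph

theorem stmt6_general {n : ℕ} (G : SimpleGraph (Fin n))
    (hPI : ∀ i j k : Fin n, i < j → j < k → G.Adj i k → G.Adj i j ∧ G.Adj j k)
    (H : SimpleGraph (Fin n ⊕ Fin n))
    (hH : ∀ u v, H.Adj u v ↔
      ∃ r s : Fin n, r < s ∧ G.Adj r s ∧
        ((u = Sum.inl r ∧ v = Sum.inr s) ∨ (u = Sum.inr s ∧ v = Sum.inl r)))
    (i j : ℕ) (hj1 : 1 ≤ j) (hji : j ≤ i)
    (k : Fin (i + 1) → Fin n)
    (hadj : ∀ r s : Fin (i + 1), (r : ℕ) < j → j ≤ (s : ℕ) →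
      H.Adj (Sum.inl (k r)) (Sum.inr (k s))) :
    G.IsClique (Set.range k) := by
  have hXY : ∀ a ∈ k '' {r | (r : ℕ) < j}, ∀ b ∈ k '' {s | j ≤ (s : ℕ)}, a < b ∧ G.Adj a b := by
    rintro _ ⟨r, hr, rfl⟩ _ ⟨s, hs, rfl⟩
    obtain ⟨r', s', hlt, hrs, ⟨hr', hs'⟩ | ⟨hr', _⟩⟩ := (hH _ _).1 (hadj r s hr hs)
    · cases hr'; cases hs'; exact ⟨hlt, hrs⟩
    · cases hr'
  have hX : (k '' {r | (r : ℕ) < j}).Nonempty := ⟨_, 0, hj1, rfl⟩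
  have hY : (k '' {s | j ≤ (s : ℕ)}).Nonempty := ⟨_, ⟨j, by omega⟩, Nat.le_refl j, rfl⟩
  refine (SimpleGraph.IsProperIntervalOrder.isClique_union hPI hX hY hXY).subset ?_
  rintro _ ⟨r, rfl⟩
  rcases lt_or_ge (r : ℕ) j with hr | hr
  exacts [Or.inl ⟨r, hr, rfl⟩, Or.inr ⟨r, hr, rfl⟩]

/-- Let `G` be a proper interval graph on `[n]` and `H` the associated bipartite graph.
If `S ∩ X = {x_{k_1},…,x_{k_j}}` and `S ∩ Y = {y_{k_{j+1}},…,y_{k_{i+1}}}` (both nonempty,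
each listed increasingly) and every `x_{k_r}` (`r ≤ j`) is adjacent in `H` to every
`y_{k_s}` (`s > j`), then `{k_1,…,k_{i+1}}` is a clique of `G`. -/
theorem stmt6 {n : ℕ} (G : SimpleGraph (Fin n))
    (hPI : ∀ i j k : Fin n, i < j → j < k → G.Adj i k → G.Adj i j ∧ G.Adj j k)
    (H : SimpleGraph (Fin n ⊕ Fin n))
    (hH : ∀ u v, H.Adj u v ↔
      ∃ r s : Fin n, r < s ∧ G.Adj r s ∧
        ((u = Sum.inl r ∧ v = Sum.inr s) ∨ (u = Sum.inr s ∧ v = Sum.inl r)))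
    (i j : ℕ) (hj1 : 1 ≤ j) (hji : j ≤ i)
    (k : Fin (i + 1) → Fin n)
    (hmonoX : ∀ r r' : Fin (i + 1), r < r' → (r' : ℕ) < j → k r < k r')
    (hmonoY : ∀ s s' : Fin (i + 1), j ≤ (s : ℕ) → s < s' → k s < k s')
    (hadj : ∀ r s : Fin (i + 1), (r : ℕ) < j → j ≤ (s : ℕ) →
      H.Adj (Sum.inl (k r)) (Sum.inr (k s))) :
    G.IsClique (Set.range k) :=
  stmt6_general G hPI H hH i j hj1 hji k hadj
end

section
/- There exists a graph G (namely the star on vertex set {1,2,3,4} with edges {1,2},{1,3},{1,4}) such that the set {2,3,4} is not a clique of G but the associated bipartite graph H (with edges {x_r,y_s} for edges {r,s} of G, r < s) contains a subset S of 3 vertices whose complement-induced subgraph H^c_S has exactly two connected components while the corresponding vertex set of G is not a clique; concretely, S = {x_1, y_2, y_3} satisfies that H^c_S has two connected components but {1,2,3} is not a clique of G. -/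
/-! In `Hᶜ` restricted to `S = {x_1, y_2, y_3}`, the vertex `x_1` is isolated because `H` joins it
to both `y_2` and `y_3` (the star has edges `{1,2}` and `{1,3}`), while `y_2` and `y_3` are adjacent
because `H` is bipartite. Hence `Hᶜ_S` has exactly the two components `{x_1}` and `{y_2, y_3}`,
although `{1,2,3}` is not a clique of the star: its leaves `2` and `3` are not adjacent. -/

namespace SimpleGraph

variable {V : Type*}

lemma eq_of_reachable_of_forall_not_adj {K : SimpleGraph V} {a v : V} (ha : ∀ w, ¬ K.Adj a w)
    (h : K.Reachable a v) : v = a := by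
  obtain ⟨p⟩ := h
  cases p with
  | nil => rfl
  | cons hadj _ => exact absurd hadj (ha _)

lemma exists_two_connectedComponents_of_isolated (K : SimpleGraph V) {a b : V} (hab : a ≠ b)
    (ha : ∀ w, ¬ K.Adj a w) (hb : ∀ v, v ≠ a → K.Reachable b v) :
    ∃ c₁ c₂ : K.ConnectedComponent, c₁ ≠ c₂ ∧ ∀ c, c = c₁ ∨ c = c₂ := by
  refine ⟨K.connectedComponentMk a, K.connectedComponentMk b, fun h => ?_, fun c => ?_⟩
  · exact hab (eq_of_reachable_of_forall_not_adj ha (ConnectedComponent.eq.mp h)).symm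
  · induction c using ConnectedComponent.ind with
    | h v =>
      by_cases hv : v = a
      · exact Or.inl (hv ▸ rfl)
      · exact Or.inr (ConnectedComponent.eq.mpr (hb v hv).symm)

lemma not_adj_of_ne_center {G : SimpleGraph V} {c : V}
    (hG : ∀ u v, G.Adj u v ↔ u ≠ v ∧ (u = c ∨ v = c)) {u v : V} (hu : u ≠ c) (hv : v ≠ c) :
    ¬ G.Adj u v := by
  rw [hG]
  tauto

section Bipartite

variable [Preorder V] {G : SimpleGraph V} {H : SimpleGraph (V ⊕ V)}
  (hH : ∀ u v, H.Adj u v ↔ ∃ r s : V, r < s ∧ G.Adj r s ∧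
    ((u = Sum.inl r ∧ v = Sum.inr s) ∨ (u = Sum.inr s ∧ v = Sum.inl r)))
include hH

lemma adj_inl_inr_of_lt {r s : V} (hrs : r < s) (hG : G.Adj r s) :
    H.Adj (Sum.inl r) (Sum.inr s) :=
  (hH _ _).mpr ⟨r, s, hrs, hG, Or.inl ⟨rfl, rfl⟩⟩

lemma not_adj_inr_inr (s t : V) : ¬ H.Adj (Sum.inr s) (Sum.inr t) := by
  rw [hH]
  rintro ⟨r, s', -, -, ⟨h, -⟩ | ⟨-, h⟩⟩ <;> cases h

end Bipartite

end SimpleGraph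

/-- For the star graph `G` on `{1,2,3,4}` with center `1` (here vertex `0` of `Fin 4`),
the set `{2,3,4}` is not a clique, yet `S = {x_1, y_2, y_3}` is a subset of `3` vertices of the
associated bipartite graph `H` such that `Hᶜ_S` has exactly two connected components while the
corresponding vertex set `{1,2,3}` of `G` is not a clique. -/
theorem stmt7 (G : SimpleGraph (Fin 4))
    (hG : ∀ u v, G.Adj u v ↔ u ≠ v ∧ (u = 0 ∨ v = 0))
    (H : SimpleGraph (Fin 4 ⊕ Fin 4))
    (hH : ∀ u v, H.Adj u v ↔
      ∃ r s : Fin 4, r < s ∧ G.Adj r s ∧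
        ((u = Sum.inl r ∧ v = Sum.inr s) ∨ (u = Sum.inr s ∧ v = Sum.inl r))) :
    ¬ G.IsClique {1, 2, 3} ∧
    (∃ c₁ c₂ : (SimpleGraph.induce
        ({Sum.inl 0, Sum.inr 1, Sum.inr 2} : Set (Fin 4 ⊕ Fin 4)) Hᶜ).ConnectedComponent,
        c₁ ≠ c₂ ∧ ∀ c, c = c₁ ∨ c = c₂) ∧
    ¬ G.IsClique {0, 1, 2} := by
  open SimpleGraph in
  have h12 : ¬ G.Adj 1 2 := not_adj_of_ne_center hG (by decide) (by decide)
  have hx₁ : ∀ s : Fin 4, s ≠ 0 → H.Adj (Sum.inl 0) (Sum.inr s) := fun s hs =>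
    adj_inl_inr_of_lt hH (Fin.pos_iff_ne_zero.mpr hs) ((hG 0 s).mpr ⟨hs.symm, Or.inl rfl⟩)
  refine ⟨fun h => h12 (h (by simp) (by simp) (by decide)), ?_,
    fun h => h12 (h (by simp) (by simp) (by decide))⟩
  refine exists_two_connectedComponents_of_isolated _ (a := ⟨Sum.inl 0, by simp⟩)
    (b := ⟨Sum.inr 1, by simp⟩) (by simp) ?_ ?_
  · rintro ⟨w, hw⟩ hadj
    rw [induce_adj, compl_adj] at hadj
    simp only [Set.mem_insert_iff, Set.mem_singleton_iff] at hw
    rcases hw with rfl | rfl | rfl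
    exacts [hadj.1 rfl, hadj.2 (hx₁ 1 (by decide)), hadj.2 (hx₁ 2 (by decide))]
  · rintro ⟨v, hv⟩ hva
    simp only [Set.mem_insert_iff, Set.mem_singleton_iff] at hv
    rcases hv with rfl | rfl | rfl
    · exact absurd rfl hva
    · rfl
    · exact Adj.reachable (by rw [induce_adj, compl_adj]; exact ⟨by simp, not_adj_inr_inr hH 1 2⟩)
end

section
/- Let G be a connected graph on [n] with a proper interval labeling whose clique complex has facets the intervals [a_1,b_1],…,[a_r,b_r] with 1 = a_1 < a_2 < ⋯ < a_r and b_r = n. If r ≥ 3, then G contains an induced path of length at least 3; specifically the vertices 1, a_2, b_2, b_3 (in this order) induce a path of length 3 in G. -/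
/-!
Vertex `a 2` lies in the first two facets and `b 2` in the last two of `[a 1, b 1], [a 2, b 2],
[a 3, b 3]`, which gives the three edges. For the non-edges: since both endpoint sequences are
increasing, a facet containing a vertex `u < a (k + 1)` has index at most `k`, so it ends at or
before `b k`; hence `u` has no neighbour beyond `b k`. Apply this with `k = 1` and `k = 2`.
-/

section IntervalFacets

variable {G : SimpleGraph ℕ} {r : ℕ} {a b : ℕ → ℕ}

theorem strictMonoOn_Icc_of_forall_lt
    (h : ∀ i j, 1 ≤ i → i < j → j ≤ r → a i < a j) : StrictMonoOn a (Set.Icc 1 r) :=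
  fun i hi j hj hij => h i j hi.1 hij hj.2

theorem adj_of_mem_facet
    (hE : ∀ u v, G.Adj u v ↔ u ≠ v ∧
      ∃ i, 1 ≤ i ∧ i ≤ r ∧ a i ≤ u ∧ u ≤ b i ∧ a i ≤ v ∧ v ≤ b i)
    {i u v : ℕ} (hi : i ∈ Set.Icc 1 r) (huv : u ≠ v)
    (hu : u ∈ Set.Icc (a i) (b i)) (hv : v ∈ Set.Icc (a i) (b i)) : G.Adj u v :=
  (hE u v).2 ⟨huv, i, hi.1, hi.2, hu.1, hu.2, hv.1, hv.2⟩

theorem not_adj_of_lt_of_lt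
    (hE : ∀ u v, G.Adj u v ↔ u ≠ v ∧
      ∃ i, 1 ≤ i ∧ i ≤ r ∧ a i ≤ u ∧ u ≤ b i ∧ a i ≤ v ∧ v ≤ b i)
    (ha : StrictMonoOn a (Set.Icc 1 r)) (hb : StrictMonoOn b (Set.Icc 1 r))
    {k u v : ℕ} (hkr : k ≤ r) (hu : u < a (k + 1)) (hv : b k < v) : ¬ G.Adj u v := by
  rw [hE]
  rintro ⟨-, i, hi1, hir, hau, -, -, hvb⟩
  have hi : i ∈ Set.Icc 1 r := ⟨hi1, hir⟩
  rcases le_or_gt i k with hik | hki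
  · have : b i ≤ b k := hb.monotoneOn hi ⟨hi1.trans hik, hkr⟩ hik
    omega
  · have : a (k + 1) ≤ a i := ha.monotoneOn ⟨by omega, by omega⟩ hi hki
    omega

end IntervalFacets

theorem stmt8_general (r : ℕ) (G : SimpleGraph ℕ) (a b : ℕ → ℕ)
    (hr : 3 ≤ r)
    (ha1 : a 1 = 1)
    (hamono : ∀ i j, 1 ≤ i → i < j → j ≤ r → a i < a j)
    (hbmono : ∀ i j, 1 ≤ i → i < j → j ≤ r → b i < b j)
    (hov : ∀ i, 1 ≤ i → i < r → a (i + 1) ≤ b i)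
    (hE : ∀ u v, G.Adj u v ↔ u ≠ v ∧
      ∃ i, 1 ≤ i ∧ i ≤ r ∧ a i ≤ u ∧ u ≤ b i ∧ a i ≤ v ∧ v ≤ b i) :
    G.Adj 1 (a 2) ∧ G.Adj (a 2) (b 2) ∧ G.Adj (b 2) (b 3) ∧
      ¬ G.Adj 1 (b 2) ∧ ¬ G.Adj 1 (b 3) ∧ ¬ G.Adj (a 2) (b 3) := by
  have ha := strictMonoOn_Icc_of_forall_lt hamono
  have hb := strictMonoOn_Icc_of_forall_lt hbmono
  have ha12 : 1 < a 2 := ha1 ▸ hamono 1 2 le_rfl one_lt_two (by omega)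
  have ha23 : a 2 < a 3 := hamono 2 3 one_le_two (by omega) hr
  have hb12 : b 1 < b 2 := hbmono 1 2 le_rfl one_lt_two (by omega)
  have hb23 : b 2 < b 3 := hbmono 2 3 one_le_two (by omega) hr
  have hov1 : a 2 ≤ b 1 := hov 1 le_rfl (by omega)
  have hov2 : a 3 ≤ b 2 := hov 2 one_le_two (by omega)
  refine ⟨?_, ?_, ?_, ?_, ?_, ?_⟩
  · exact adj_of_mem_facet (i := 1) hE ⟨le_rfl, by omega⟩ (by omega)
      ⟨ha1.le, by omega⟩ ⟨by omega, hov1⟩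
  · exact adj_of_mem_facet (i := 2) hE ⟨one_le_two, by omega⟩ (by omega)
      ⟨le_rfl, by omega⟩ ⟨by omega, le_rfl⟩
  · exact adj_of_mem_facet (i := 3) hE ⟨by omega, hr⟩ (by omega)
      ⟨hov2, hb23.le⟩ ⟨by omega, le_rfl⟩
  · exact not_adj_of_lt_of_lt (k := 1) hE ha hb (by omega) ha12 hb12
  · exact not_adj_of_lt_of_lt (k := 1) hE ha hb (by omega) ha12 (hb12.trans hb23)
  · exact not_adj_of_lt_of_lt (k := 2) hE ha hb (by omega) ha23 hb23

/-- Let `G` be a connected proper interval graph on `[n]` whose clique complex has facets the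
intervals `[a 1, b 1], …, [a r, b r]` with `1 = a 1 < a 2 < ⋯ < a r`, `b 1 < ⋯ < b r = n`.
If `r ≥ 3` then the vertices `1, a 2, b 2, b 3` induce a path of length `3` in `G`. -/
theorem stmt8 (n r : ℕ) (G : SimpleGraph ℕ) (a b : ℕ → ℕ)
    (hr : 3 ≤ r)
    (ha1 : a 1 = 1) (hbr : b r = n)
    (hamono : ∀ i j, 1 ≤ i → i < j → j ≤ r → a i < a j)
    (hbmono : ∀ i j, 1 ≤ i → i < j → j ≤ r → b i < b j)
    (hab : ∀ i, 1 ≤ i → i ≤ r → a i ≤ b i)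
    (hov : ∀ i, 1 ≤ i → i < r → a (i + 1) ≤ b i)
    (hE : ∀ u v, G.Adj u v ↔ u ≠ v ∧
      ∃ i, 1 ≤ i ∧ i ≤ r ∧ a i ≤ u ∧ u ≤ b i ∧ a i ≤ v ∧ v ≤ b i) :
    G.Adj 1 (a 2) ∧ G.Adj (a 2) (b 2) ∧ G.Adj (b 2) (b 3) ∧
      ¬ G.Adj 1 (b 2) ∧ ¬ G.Adj 1 (b 3) ∧ ¬ G.Adj (a 2) (b 3) :=
  stmt8_general r G a b hr ha1 hamono hbmono hov hE
end
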